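/- Let H be a complex Hilbert space, let u : [0,∞) → H be differentiable and satisfy u'(t) = A(t)(u(t)) + F(t, u(t)) for all t ≥ 0, where each A(t) is a bounded linear operator on H with Re⟪A(t)x, x⟫ ≤ -k‖x‖² for all t ≥ 0, x ∈ H, for some constant k > 0, and ‖F(t,x)‖ ≤ c₀‖x‖^p for all t ≥ 0, x ∈ H, with constants c₀ > 0, p > 1. Let ε ∈ (0, k) and suppose u(0) ≠ 0 and the smallness condition on the nonlinearity c₀ ≤ ε/‖u(0)‖^{p-1} holds. Then ‖u(t)‖ ≤ ‖u(0)‖·e^{-(k-ε)t} for all t ≥ 0; in particular lim_{t→∞}‖u(t)‖ = 0 even though ‖u(0)‖ is not assumed small. -/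

import Mathlib

/-!
Along the trajectory, `Re⟪u', u⟫ ≤ -(k - c₀‖u‖^{p-1})‖u‖²`, so the solution is dissipative with
rate `k - ε` as long as `‖u t‖ ≤ ‖u 0‖`. Since the rate is positive, the trajectory points strictly
inward on the sphere of radius `‖u 0‖` and therefore never leaves that ball; Grönwall's inequality
for `‖u t‖²` then gives the exponential decay.
-/

open Filter
open scoped InnerProductSpace

section Dissipative

variable {𝕜 E : Type*} [RCLike 𝕜] [NormedAddCommGroup E] [InnerProductSpace 𝕜 E]

theorem re_inner_le_of_norm_le_mul_rpow {x y : E} {c p ε : ℝ} (hp : p ≠ 0)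
    (hy : ‖y‖ ≤ c * ‖x‖ ^ p) (hc : c * ‖x‖ ^ (p - 1) ≤ ε) :
    RCLike.re ⟪y, x⟫_𝕜 ≤ ε * ‖x‖ ^ 2 := by
  have hsplit : ‖x‖ ^ p = ‖x‖ ^ (p - 1) * ‖x‖ := by
    simpa using Real.rpow_add' (norm_nonneg x) (by simpa using hp : p - 1 + 1 ≠ 0)
  calc RCLike.re ⟪y, x⟫_𝕜 ≤ ‖y‖ * ‖x‖ := re_inner_le_norm y x
    _ ≤ c * ‖x‖ ^ p * ‖x‖ := by gcongr
    _ = c * ‖x‖ ^ (p - 1) * ‖x‖ ^ 2 := by rw [hsplit]; ring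
    _ ≤ ε * ‖x‖ ^ 2 := by gcongr

variable [NormedSpace ℝ E] {u u' : ℝ → E}

variable (𝕜) in
theorem HasDerivAt.norm_sq_re_inner {x : E} {t : ℝ} (hu : HasDerivAt u x t) :
    HasDerivAt (‖u ·‖ ^ 2) (2 * RCLike.re ⟪x, u t⟫_𝕜) t := by
  have h := (RCLike.reCLM (K := 𝕜)).hasFDerivAt.comp_hasDerivAt t (hu.inner 𝕜 hu)
  simp only [Function.comp_def, RCLike.reCLM_apply, inner_self_eq_norm_sq, map_add,
    ← inner_conj_symm (u t) x, RCLike.conj_re] at h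
  simpa only [two_mul] using h

theorem norm_le_of_re_inner_deriv_neg {R : ℝ} (hu : ∀ t, 0 ≤ t → HasDerivAt u (u' t) t)
    (hR : ‖u 0‖ ≤ R)
    (hinward : ∀ t, 0 ≤ t → ‖u t‖ = R → RCLike.re ⟪u' t, u t⟫_𝕜 < 0) :
    ∀ t, 0 ≤ t → ‖u t‖ ≤ R := by
  intro t ht
  have hR0 : 0 ≤ R := (norm_nonneg _).trans hR
  have hderiv s (hs : 0 ≤ s) := (hu s hs).norm_sq_re_inner 𝕜
  have hsq : ‖u t‖ ^ 2 ≤ R ^ 2 := by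
    refine image_le_of_deriv_right_lt_deriv_boundary (B := fun _ => R ^ 2) (B' := 0)
      (fun s hs => (hderiv s hs.1).continuousAt.continuousWithinAt)
      (fun s hs => (hderiv s hs.1).hasDerivWithinAt) (by gcongr)
      (fun _ => hasDerivAt_const _ _) (fun s hs hsR => ?_) ⟨ht, le_rfl⟩
    have := hinward s hs.1 ((sq_eq_sq₀ (norm_nonneg _) hR0).1 hsR)
    simp only [Pi.zero_apply]
    linarith
  exact (pow_le_pow_iff_left₀ (norm_nonneg _) hR0 two_ne_zero).1 hsq

theorem norm_le_mul_exp_of_re_inner_deriv_le {a : ℝ} (hu : ∀ t, 0 ≤ t → HasDerivAt u (u' t) t)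
    (hdiss : ∀ t, 0 ≤ t → RCLike.re ⟪u' t, u t⟫_𝕜 ≤ -a * ‖u t‖ ^ 2) :
    ∀ t, 0 ≤ t → ‖u t‖ ≤ ‖u 0‖ * Real.exp (-a * t) := by
  intro t ht
  have hderiv s (hs : 0 ≤ s) := (hu s hs).norm_sq_re_inner 𝕜
  have hsq : ‖u t‖ ^ 2 ≤ (‖u 0‖ * Real.exp (-a * t)) ^ 2 := by
    have := le_gronwallBound_of_liminf_deriv_right_le (K := -2 * a) (ε := 0)
      (fun s hs => (hderiv s hs.1).continuousAt.continuousWithinAt)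
      (fun s hs _ hr => (hderiv s hs.1).hasDerivWithinAt.liminf_right_slope_le hr) le_rfl
      (fun s hs => by linarith [hdiss s hs.1]) t ⟨ht, le_rfl⟩
    rw [gronwallBound_ε0, sub_zero] at this
    rwa [mul_pow, ← Real.exp_nat_mul, Nat.cast_ofNat, ← mul_assoc, mul_neg, ← neg_mul]
  exact (pow_le_pow_iff_left₀ (norm_nonneg _) (by positivity) two_ne_zero).1 hsq

theorem norm_le_mul_exp_of_re_inner_deriv_le_of_norm_le {a : ℝ} (ha : 0 < a) (hu0 : u 0 ≠ 0)
    (hu : ∀ t, 0 ≤ t → HasDerivAt u (u' t) t)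
    (hdiss : ∀ t, 0 ≤ t → ‖u t‖ ≤ ‖u 0‖ → RCLike.re ⟪u' t, u t⟫_𝕜 ≤ -a * ‖u t‖ ^ 2) :
    ∀ t, 0 ≤ t → ‖u t‖ ≤ ‖u 0‖ * Real.exp (-a * t) := by
  have hball := norm_le_of_re_inner_deriv_neg (𝕜 := 𝕜) hu le_rfl fun t ht hut => by
    have hpos : 0 < ‖u t‖ := hut ▸ norm_pos_iff.2 hu0
    have := hdiss t ht hut.le
    have := mul_pos ha (pow_pos hpos 2)
    linarith
  exact norm_le_mul_exp_of_re_inner_deriv_le hu fun t ht => hdiss t ht (hball t ht)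

end Dissipative

theorem decay_for_small_nonlinearity_general
    {H : Type*} [NormedAddCommGroup H] [InnerProductSpace ℂ H]
    (A : ℝ → H →L[ℂ] H) (F : ℝ → H → H) (u : ℝ → H)
    (hu : ∀ t : ℝ, 0 ≤ t → HasDerivAt u (A t (u t) + F t (u t)) t)
    (c₀ p : ℝ) (hc₀ : 0 < c₀) (hp : 1 < p)
    (hF : ∀ t : ℝ, 0 ≤ t → ∀ x : H, ‖F t x‖ ≤ c₀ * ‖x‖ ^ p)
    (k : ℝ)
    (hA : ∀ t : ℝ, 0 ≤ t → ∀ x : H, (inner ℂ (A t x) x : ℂ).re ≤ -k * ‖x‖ ^ 2)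
    (ε : ℝ) (hε : ε ∈ Set.Ioo 0 k)
    (hu0 : u 0 ≠ 0)
    (hsmall : c₀ ≤ ε / ‖u 0‖ ^ (p - 1)) :
    (∀ t : ℝ, 0 ≤ t → ‖u t‖ ≤ ‖u 0‖ * Real.exp (-(k - ε) * t)) ∧
    Filter.Tendsto (fun t : ℝ => ‖u t‖) Filter.atTop (nhds 0) := by
  have hc₀u0 : c₀ * ‖u 0‖ ^ (p - 1) ≤ ε :=
    (le_div_iff₀ (Real.rpow_pos_of_pos (norm_pos_iff.2 hu0) _)).1 hsmall
  have hdecay := norm_le_mul_exp_of_re_inner_deriv_le_of_norm_le (𝕜 := ℂ) (sub_pos.2 hε.2) hu0 hu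
    fun t ht hut => by
      have hFu := re_inner_le_of_norm_le_mul_rpow (𝕜 := ℂ) (by linarith) (hF t ht (u t))
        ((mul_le_mul_of_nonneg_left (Real.rpow_le_rpow (norm_nonneg _) hut (by linarith))
          hc₀.le).trans hc₀u0)
      have hAu := hA t ht (u t)
      simp only [RCLike.re_to_complex, inner_add_left, Complex.add_re] at hFu ⊢
      linarith
  refine ⟨hdecay, squeeze_zero' (Eventually.of_forall fun t => norm_nonneg _)
    ((eventually_ge_atTop 0).mono hdecay) ?_⟩
  simpa using (Real.tendsto_exp_atBot.comp
    (tendsto_id.const_mul_atTop_of_neg (neg_lt_zero.2 (sub_pos.2 hε.2)))).const_mul ‖u 0‖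

/-- Variant of Theorem 1.2: smallness of `‖u 0‖` replaced by smallness of `c₀`.
If `ε ∈ (0,k)`, `u 0 ≠ 0` and `c₀ ≤ ε/‖u 0‖^{p-1}`, then
`‖u t‖ ≤ ‖u 0‖ e^{-(k-ε)t}` for all `t ≥ 0`, and in particular `‖u t‖ → 0`. -/
theorem decay_for_small_nonlinearity
    {H : Type*} [NormedAddCommGroup H] [InnerProductSpace ℂ H] [CompleteSpace H]
    (A : ℝ → H →L[ℂ] H) (F : ℝ → H → H) (u : ℝ → H)
    (hu : ∀ t : ℝ, 0 ≤ t → HasDerivAt u (A t (u t) + F t (u t)) t)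
    (c₀ p : ℝ) (hc₀ : 0 < c₀) (hp : 1 < p)
    (hF : ∀ t : ℝ, 0 ≤ t → ∀ x : H, ‖F t x‖ ≤ c₀ * ‖x‖ ^ p)
    (k : ℝ) (hk : 0 < k)
    (hA : ∀ t : ℝ, 0 ≤ t → ∀ x : H, (inner ℂ (A t x) x : ℂ).re ≤ -k * ‖x‖ ^ 2)
    (ε : ℝ) (hε : ε ∈ Set.Ioo 0 k)
    (hu0 : u 0 ≠ 0)
    (hsmall : c₀ ≤ ε / ‖u 0‖ ^ (p - 1)) :
    (∀ t : ℝ, 0 ≤ t → ‖u t‖ ≤ ‖u 0‖ * Real.exp (-(k - ε) * t)) ∧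
    Filter.Tendsto (fun t : ℝ => ‖u t‖) Filter.atTop (nhds 0) :=
  decay_for_small_nonlinearity_general A F u hu c₀ p hc₀ hp hF k hA ε hε hu0 hsmall
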